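/- Let 1 ≤ k ≤ n, let q ≥ 1 be an integer, let M be an n×n real symmetric positive-definite matrix, and let κ̂ ≥ 1 satisfy κ(M) ≤ κ̂. Then the standard error σ̂(S_Y) = √(Var(Y_k(M))/q) of the q-sample mean of log-minors satisfies σ̂(S_Y) ≤ (1/2)·√(min{k, n−k}/q)·log κ̂. -/

import Mathlib

open Matrix Real Finset

/-- The log-determinant of the principal submatrix of `M` indexed by `s`. -/
noncomputable def logMinor {n : ℕ} (M : Matrix (Fin n) (Fin n) ℝ) (s : Finset (Fin n)) : ℝ :=
  Real.log (M.submatrix (fun i : {x // x ∈ s} => (i : Fin n))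
    (fun i : {x // x ∈ s} => (i : Fin n))).det

/-- The mean of `Y_k(M)`, the log-minor of a uniformly random `k`-element index set. -/
noncomputable def meanLM {n : ℕ} (k : ℕ) (M : Matrix (Fin n) (Fin n) ℝ) : ℝ :=
  (∑ s ∈ Finset.powersetCard k (Finset.univ : Finset (Fin n)), logMinor M s) / (n.choose k)

/-- The variance of `Y_k(M)` under the uniform distribution on `k`-element index sets. -/
noncomputable def varLM {n : ℕ} (k : ℕ) (M : Matrix (Fin n) (Fin n) ℝ) : ℝ :=
  (∑ s ∈ Finset.powersetCard k (Finset.univ : Finset (Fin n)),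
    (logMinor M s - meanLM k M) ^ 2) / (n.choose k)

open Classical in
/-- `P(|Y_k(M) - E[Y_k(M)]| ≥ r)` under the uniform distribution on `k`-element index sets. -/
noncomputable def probDevLM {n : ℕ} (k : ℕ) (M : Matrix (Fin n) (Fin n) ℝ) (r : ℝ) : ℝ :=
  (((Finset.powersetCard k (Finset.univ : Finset (Fin n))).filter
      (fun s => r ≤ |logMinor M s - meanLM k M|)).card : ℝ) / (n.choose k)

/-- The largest eigenvalue `λ₁(M)` of a Hermitian matrix. -/
noncomputable def maxEig {n : ℕ} {M : Matrix (Fin n) (Fin n) ℝ} (hM : M.IsHermitian) : ℝ :=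
  ⨆ i, hM.eigenvalues i

/-- The smallest eigenvalue `λₙ(M)` of a Hermitian matrix. -/
noncomputable def minEig {n : ℕ} {M : Matrix (Fin n) (Fin n) ℝ} (hM : M.IsHermitian) : ℝ :=
  ⨅ i, hM.eigenvalues i

/-- The condition number `κ(M) = λ₁(M) / λₙ(M)` of a Hermitian matrix. -/
noncomputable def condNum {n : ℕ} {M : Matrix (Fin n) (Fin n) ℝ} (hM : M.IsHermitian) : ℝ :=
  maxEig hM / minEig hM

/-!
Call `F : Finset α → ℝ` swap-Lipschitz with constant `L` if exchanging one element of a set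
changes `F` by at most `L`. For such `F` the variance over a uniform `k`-subset is at most
`k L² / 4`: a uniform `(k + 1)`-set is a uniform `k`-set `j` plus a uniform new element, and by
the law of total variance the within-`j` variance is at most `L² / 4` (Popoviciu), while the
between-`j` variance is that of the average `j ↦ 𝔼 a ∉ j, F (j ∪ {a})`, again swap-Lipschitz
with constant `L`. Since `s ↦ F sᶜ` is swap-Lipschitz too, `k` may be replaced by `n - k`.

For `a ≤ M ≤ b` in the Loewner order, `s ↦ log det M_s` is swap-Lipschitz with constant
`log (b / a)`: with `u = t ∪ {x, y}`, Cramer's rule gives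
`det M_{u \ {y}} = det M_u · (M_u⁻¹)_{yy}`, and the diagonal entries of `M_u⁻¹` lie in
`[b⁻¹, a⁻¹]`. Taking `a = λₙ(M)`, `b = λ₁(M)` gives `Var(Y_k(M)) ≤ min{k, n−k} (log κ)² / 4`.
-/

open scoped BigOperators MatrixOrder

section Variance

variable {ι κ : Type*}

noncomputable def varOn (s : Finset ι) (f : ι → ℝ) : ℝ :=
  𝔼 i ∈ s, (f i - 𝔼 j ∈ s, f j) ^ 2

lemma expect_sq_sub_eq_varOn_add {s : Finset ι} (hs : s.Nonempty) (f : ι → ℝ) (c : ℝ) :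
    𝔼 i ∈ s, (f i - c) ^ 2 = varOn s f + (𝔼 j ∈ s, f j - c) ^ 2 := by
  set m := 𝔼 j ∈ s, f j
  have hm : 𝔼 i ∈ s, (f i - m) = 0 := by rw [expect_sub_distrib, expect_const hs, sub_self]
  calc 𝔼 i ∈ s, (f i - c) ^ 2
      = 𝔼 i ∈ s, ((f i - m) ^ 2 + 2 * (m - c) * (f i - m) + (m - c) ^ 2) :=
        expect_congr rfl fun i _ => by ring
    _ = varOn s f + (m - c) ^ 2 := by
        rw [expect_add_distrib, expect_add_distrib, ← mul_expect, hm, expect_const hs, varOn]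
        ring

lemma varOn_le_expect_sq_sub (s : Finset ι) (f : ι → ℝ) (c : ℝ) :
    varOn s f ≤ 𝔼 i ∈ s, (f i - c) ^ 2 := by
  rcases s.eq_empty_or_nonempty with rfl | hs
  · simp [varOn]
  · rw [expect_sq_sub_eq_varOn_add hs]
    exact le_add_of_nonneg_right (sq_nonneg _)

lemma varOn_le_of_abs_sub_le {s : Finset ι} {f : ι → ℝ} {L : ℝ}
    (h : ∀ i ∈ s, ∀ j ∈ s, |f i - f j| ≤ L) : varOn s f ≤ L ^ 2 / 4 := by
  rcases s.eq_empty_or_nonempty with rfl | hs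
  · simp only [varOn, expect_empty]; positivity
  obtain ⟨imax, himax, hmax⟩ := s.exists_max_image f hs
  obtain ⟨imin, himin, hmin⟩ := s.exists_min_image f hs
  have hrange := (le_abs_self _).trans (h imax himax imin himin)
  calc varOn s f ≤ 𝔼 i ∈ s, (f i - (f imin + f imax) / 2) ^ 2 := varOn_le_expect_sq_sub _ _ _
    _ ≤ L ^ 2 / 4 := expect_le hs fun i hi => by
        have := hmax i hi
        have := hmin i hi
        nlinarith

lemma varOn_nbij' {s : Finset ι} {t : Finset κ} {f : ι → ℝ} {g : κ → ℝ} (i : ι → κ) (j : κ → ι)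
    (hi : ∀ a ∈ s, i a ∈ t) (hj : ∀ a ∈ t, j a ∈ s)
    (left_inv : ∀ a ∈ s, j (i a) = a) (right_inv : ∀ a ∈ t, i (j a) = a)
    (h : ∀ a ∈ s, f a = g (i a)) : varOn s f = varOn t g := by
  have hmean := expect_nbij' i j hi hj left_inv right_inv h
  rw [varOn, varOn, hmean]
  exact expect_nbij' i j hi hj left_inv right_inv fun a ha => by rw [h a ha]

end Variance

section SwapLipschitz

variable {α : Type*} [DecidableEq α]

def SwapLipschitz (L : ℝ) (F : Finset α → ℝ) : Prop :=
  ∀ ⦃t : Finset α⦄ ⦃x y : α⦄, x ∉ t → y ∉ t → |F (insert x t) - F (insert y t)| ≤ L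

namespace SwapLipschitz

variable {L : ℝ} {F : Finset α → ℝ}

lemma nonneg (hF : SwapLipschitz L F) {t : Finset α} {x : α} (hx : x ∉ t) : 0 ≤ L := by
  simpa using hF hx hx

lemma mono (hF : SwapLipschitz L F) {L' : ℝ} (hL : L ≤ L') : SwapLipschitz L' F :=
  fun _ _ _ hx hy => (hF hx hy).trans hL

variable [Fintype α]

lemma compl (hF : SwapLipschitz L F) : SwapLipschitz L (fun s => F sᶜ) := by
  intro t x y hx hy
  obtain rfl | hxy := eq_or_ne x y
  · simpa using hF.nonneg hx
  set w := (insert x (insert y t))ᶜ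
  have hxw : (insert x t)ᶜ = insert y w := by
    ext z; by_cases z = y <;> simp_all [w, eq_comm]
  have hyw : (insert y t)ᶜ = insert x w := by
    ext z; by_cases z = x <;> simp_all [w, eq_comm]
  simp only [hxw, hyw]
  rw [abs_sub_comm]
  exact hF (by simp [w]) (by simp [w])

end SwapLipschitz

variable [Fintype α]

noncomputable def upAverage (F : Finset α → ℝ) (j : Finset α) : ℝ :=
  𝔼 a ∈ jᶜ, F (insert a j)

/-- Averages over the free element are coupled through the transposition of `x` and `y`. -/
lemma swapLipschitz_upAverage {L : ℝ} {F : Finset α → ℝ} (hF : SwapLipschitz L F) :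
    SwapLipschitz L (upAverage F) := by
  intro t x y hx hy
  obtain rfl | hxy := eq_or_ne x y
  · simpa using hF.nonneg hx
  have hswap : upAverage F (insert y t) =
      𝔼 a ∈ (insert x t)ᶜ, F (insert (Equiv.swap x y a) (insert y t)) := by
    refine (expect_equiv (Equiv.swap x y) (fun a => ?_) fun _ _ => rfl).symm
    rcases eq_or_ne a x with rfl | hax
    · simp [hx]
    rcases eq_or_ne a y with rfl | hay
    · simp [hax, hxy, hx, hy]
    simp [Equiv.swap_apply_of_ne_of_ne hax hay, hax, hay]
  rw [upAverage, hswap, ← expect_sub_distrib]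
  refine (abs_expect_le _ _).trans (expect_le ⟨y, by simp [hxy.symm, hy]⟩ fun a ha => ?_)
  simp only [mem_compl, mem_insert, not_or] at ha
  rcases eq_or_ne a y with rfl | hay
  · simpa [Finset.insert_comm] using hF.nonneg hx
  rw [Equiv.swap_apply_of_ne_of_ne ha.1 hay, Finset.insert_comm a x, Finset.insert_comm a y]
  exact hF (by simp [Ne.symm ha.1, hx]) (by simp [Ne.symm hay, hy])

end SwapLipschitz

section DoubleCounting

variable {α : Type*} [Fintype α] [DecidableEq α]

lemma sum_powersetCard_sum_compl_insert (k : ℕ) (φ : Finset α → ℝ) :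
    ∑ j ∈ powersetCard k univ, ∑ a ∈ jᶜ, φ (insert a j) =
      (k + 1) * ∑ s ∈ powersetCard (k + 1) univ, φ s := by
  have hcard : ∑ s ∈ powersetCard (k + 1) univ, ∑ _x ∈ s, φ s =
      (k + 1) * ∑ s ∈ powersetCard (k + 1) univ, φ s := by
    rw [mul_sum]
    refine sum_congr rfl fun s hs => ?_
    rw [sum_const, mem_powersetCard_univ.1 hs, nsmul_eq_mul]
    push_cast; ring
  rw [← hcard, sum_sigma', sum_sigma']
  refine sum_nbij' (fun p => ⟨insert p.2 p.1, p.2⟩) (fun p => ⟨p.1.erase p.2, p.2⟩)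
    ?_ ?_ ?_ ?_ fun _ _ => rfl
  · rintro ⟨j, a⟩ hp
    simp only [mem_sigma, mem_powersetCard_univ, mem_compl] at hp ⊢
    exact ⟨by rw [card_insert_of_notMem hp.2, hp.1], mem_insert_self _ _⟩
  · rintro ⟨s, x⟩ hp
    simp only [mem_sigma, mem_powersetCard_univ, mem_compl] at hp ⊢
    exact ⟨by rw [card_erase_of_mem hp.2, hp.1, Nat.add_sub_cancel], notMem_erase _ _⟩
  · rintro ⟨j, a⟩ hp
    simp only [mem_sigma, mem_compl] at hp
    simp [erase_insert hp.2]
  · rintro ⟨s, x⟩ hp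
    simp only [mem_sigma] at hp
    simp [insert_erase hp.2]

lemma expect_powersetCard_expect_compl_insert {k : ℕ} (hk : k < Fintype.card α)
    (φ : Finset α → ℝ) :
    𝔼 j ∈ powersetCard k univ, 𝔼 a ∈ jᶜ, φ (insert a j) =
      𝔼 s ∈ powersetCard (k + 1) univ, φ s := by
  have hchoose : ((Fintype.card α).choose (k + 1) : ℝ) * (k + 1) =
      (Fintype.card α).choose k * (Fintype.card α - k : ℕ) := by
    exact_mod_cast Nat.choose_succ_right_eq _ k
  have hNk : ((Fintype.card α - k : ℕ) : ℝ) ≠ 0 := by norm_cast; omega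
  have hC : ((Fintype.card α).choose (k + 1) : ℝ) ≠ 0 := by
    exact_mod_cast (Nat.choose_pos hk).ne'
  have hC' : ((Fintype.card α).choose k : ℝ) ≠ 0 := by
    exact_mod_cast (Nat.choose_pos hk.le).ne'
  calc 𝔼 j ∈ powersetCard k univ, 𝔼 a ∈ jᶜ, φ (insert a j)
      = 𝔼 j ∈ powersetCard k univ, (∑ a ∈ jᶜ, φ (insert a j)) / (Fintype.card α - k : ℕ) :=
        expect_congr rfl fun j hj => by
          rw [expect_eq_sum_div_card, card_compl, mem_powersetCard_univ.1 hj]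
    _ = (k + 1) * (∑ s ∈ powersetCard (k + 1) univ, φ s) /
          ((Fintype.card α - k : ℕ) * (Fintype.card α).choose k) := by
        rw [expect_eq_sum_div_card, ← sum_div, sum_powersetCard_sum_compl_insert,
          card_powersetCard, card_univ, div_div]
    _ = 𝔼 s ∈ powersetCard (k + 1) univ, φ s := by
        rw [expect_eq_sum_div_card, card_powersetCard, card_univ]
        field_simp
        linear_combination (∑ s ∈ powersetCard (k + 1) univ, φ s) * hchoose

end DoubleCounting

section VarianceBound

variable {α : Type*} [Fintype α] [DecidableEq α] {L : ℝ} {F : Finset α → ℝ}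

lemma varOn_powersetCard_succ_le (hF : SwapLipschitz L F) {k : ℕ} (hk : k < Fintype.card α) :
    varOn (powersetCard (k + 1) univ) F ≤
      L ^ 2 / 4 + varOn (powersetCard k univ) (upAverage F) := by
  set μ := 𝔼 s ∈ powersetCard (k + 1) univ, F s
  have hμ : 𝔼 j ∈ powersetCard k univ, upAverage F j = μ :=
    expect_powersetCard_expect_compl_insert hk F
  have hfiber : ∀ j ∈ powersetCard k univ,
      𝔼 a ∈ jᶜ, (F (insert a j) - μ) ^ 2 ≤ L ^ 2 / 4 + (upAverage F j - μ) ^ 2 := by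
    intro j hj
    have hne : jᶜ.Nonempty := by
      rw [← card_pos, card_compl, mem_powersetCard_univ.1 hj]; omega
    rw [expect_sq_sub_eq_varOn_add hne]
    exact add_le_add_left
      (varOn_le_of_abs_sub_le fun a ha b hb => hF (mem_compl.1 ha) (mem_compl.1 hb)) _
  calc varOn (powersetCard (k + 1) univ) F
      = 𝔼 j ∈ powersetCard k univ, 𝔼 a ∈ jᶜ, (F (insert a j) - μ) ^ 2 :=
        (expect_powersetCard_expect_compl_insert hk _).symm
    _ ≤ 𝔼 j ∈ powersetCard k univ, (L ^ 2 / 4 + (upAverage F j - μ) ^ 2) :=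
        expect_le_expect hfiber
    _ = L ^ 2 / 4 + varOn (powersetCard k univ) (upAverage F) := by
        rw [expect_add_distrib, expect_const (powersetCard_nonempty.2 (by simpa using hk.le)),
          varOn, hμ]

lemma SwapLipschitz.varOn_powersetCard_le (hF : SwapLipschitz L F) (k : ℕ) :
    varOn (powersetCard k univ) F ≤ k * (L ^ 2 / 4) := by
  induction k generalizing F with
  | zero => simp [varOn]
  | succ k ih =>
    rcases lt_or_ge k (Fintype.card α) with hk | hk
    · calc varOn (powersetCard (k + 1) univ) F
          ≤ L ^ 2 / 4 + varOn (powersetCard k univ) (upAverage F) :=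
            varOn_powersetCard_succ_le hF hk
        _ ≤ L ^ 2 / 4 + k * (L ^ 2 / 4) := by grw [ih (swapLipschitz_upAverage hF)]
        _ = (k + 1 : ℕ) * (L ^ 2 / 4) := by push_cast; ring
    · rw [powersetCard_eq_empty.2 (by simpa using Nat.lt_succ_of_le hk)]
      simp only [varOn, expect_empty]
      positivity

lemma varOn_powersetCard_compl {k : ℕ} (hk : k ≤ Fintype.card α) (F : Finset α → ℝ) :
    varOn (powersetCard k univ) F =
      varOn (powersetCard (Fintype.card α - k) univ) (fun s => F sᶜ) :=
  varOn_nbij' compl compl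
    (fun s hs => by rw [mem_powersetCard_univ, card_compl, mem_powersetCard_univ.1 hs])
    (fun s hs => by rw [mem_powersetCard_univ, card_compl, mem_powersetCard_univ.1 hs]; omega)
    (fun s _ => compl_compl s) (fun s _ => compl_compl s) (fun s _ => by rw [compl_compl])

lemma SwapLipschitz.varOn_powersetCard_le_min (hF : SwapLipschitz L F) {k : ℕ}
    (hk : k ≤ Fintype.card α) :
    varOn (powersetCard k univ) F ≤ min (k : ℝ) (Fintype.card α - k) * (L ^ 2 / 4) := by
  rw [min_mul_of_nonneg _ _ (by positivity)]
  refine le_min (hF.varOn_powersetCard_le k) ?_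
  rw [varOn_powersetCard_compl hk, ← Nat.cast_sub hk]
  exact hF.compl.varOn_powersetCard_le _

end VarianceBound

section Minors

variable {ι κ κ' R : Type*} [Fintype κ] [DecidableEq κ] [Fintype κ'] [DecidableEq κ']
  [CommRing R]

abbrev Matrix.principalSubmatrix (P : Matrix ι ι R) (s : Finset ι) : Matrix s s R :=
  P.submatrix (↑) (↑)

lemma det_submatrix_eq_of_range_eq (P : Matrix ι ι R) {e : κ → ι} {e' : κ' → ι}
    (he : Function.Injective e) (he' : Function.Injective e') (h : Set.range e = Set.range e') :
    (P.submatrix e e).det = (P.submatrix e' e').det := by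
  let σ : κ ≃ κ' :=
    (Equiv.ofInjective e he).trans ((Equiv.setCongr h).trans (Equiv.ofInjective e' he').symm)
  have hσ : e' ∘ σ = e := funext fun i => by simp [σ, Equiv.apply_ofInjective_symm]
  rw [← hσ, ← submatrix_submatrix, det_submatrix_equiv_self]

lemma det_updateRow_single_self (A : Matrix κ κ R) (v : κ) :
    (A.updateRow v (Pi.single v 1)).det = (A.submatrix ((↑) : {x // x ≠ v} → κ) (↑)).det := by
  rw [← det_submatrix_equiv_self (Equiv.sumCompl (· ≠ v))]
  set B := (A.updateRow v (Pi.single v 1)).submatrix (Equiv.sumCompl (· ≠ v))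
    (Equiv.sumCompl (· ≠ v))
  have h₂₁ : B.toBlocks₂₁ = 0 := by
    ext ⟨i, hi⟩ ⟨j, hj⟩
    simp only [not_not] at hi
    subst hi
    simp [B, toBlocks₂₁, hj]
  have h₂₂ : B.toBlocks₂₂ = 1 := by
    ext ⟨i, hi⟩ ⟨j, hj⟩
    simp only [not_not] at hi hj
    subst hi hj
    simp [B, toBlocks₂₂]
  rw [← fromBlocks_toBlocks B, h₂₁, h₂₂, det_fromBlocks_zero₂₁, det_one, mul_one]
  congr 1
  ext ⟨i, hi⟩ ⟨j, hj⟩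
  simp [B, toBlocks₁₁, updateRow_ne hi]

lemma det_submatrix_ne_eq_det_mul_inv_apply (A : Matrix κ κ R) (v : κ) (hA : IsUnit A.det) :
    (A.submatrix ((↑) : {x // x ≠ v} → κ) (↑)).det = A.det * A⁻¹ v v := by
  rw [Matrix.inv_def, Matrix.smul_apply, adjugate_apply, det_updateRow_single_self, smul_eq_mul,
    ← mul_assoc, Ring.mul_inverse_cancel _ hA, one_mul]

lemma det_principalSubmatrix_erase [DecidableEq ι] (P : Matrix ι ι R) {u : Finset ι} {v : ι}
    (hv : v ∈ u) (hP : IsUnit (P.principalSubmatrix u).det) :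
    (P.principalSubmatrix (u.erase v)).det =
      (P.principalSubmatrix u).det * (P.principalSubmatrix u)⁻¹ ⟨v, hv⟩ ⟨v, hv⟩ := by
  rw [← det_submatrix_ne_eq_det_mul_inv_apply _ _ hP, submatrix_submatrix]
  refine det_submatrix_eq_of_range_eq P Subtype.val_injective
    (Subtype.val_injective.comp Subtype.val_injective) ?_
  ext z
  simp [and_comm]

end Minors

section LoewnerBounds

variable {ι κ : Type*}

lemma submatrix_mono {A B : Matrix ι ι ℝ} (h : A ≤ B) (e : κ → ι) :
    A.submatrix e e ≤ B.submatrix e e :=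
  le_iff.2 ((le_iff.1 h).submatrix e)

variable [Fintype ι] [DecidableEq ι] [Fintype κ] [DecidableEq κ]

lemma algebraMap_submatrix {e : κ → ι} (he : Function.Injective e) (r : ℝ) :
    (algebraMap ℝ (Matrix ι ι ℝ) r).submatrix e e = algebraMap ℝ (Matrix κ κ ℝ) r := by
  ext i j
  simp [algebraMap_eq_diagonal, diagonal_apply, he.eq_iff]

lemma le_apply_self_of_algebraMap_le {A : Matrix ι ι ℝ} {c : ℝ}
    (h : algebraMap ℝ _ c ≤ A) (i : ι) : c ≤ A i i := by
  simpa [algebraMap_eq_diagonal] using (le_iff.1 h).diag_nonneg (i := i)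

lemma apply_self_le_of_le_algebraMap {A : Matrix ι ι ℝ} {c : ℝ}
    (h : A ≤ algebraMap ℝ _ c) (i : ι) : A i i ≤ c := by
  simpa [algebraMap_eq_diagonal] using (le_iff.1 h).diag_nonneg (i := i)

namespace Matrix.IsHermitian

variable {Q : Matrix ι ι ℝ} (hQ : Q.IsHermitian) {a b : ℝ}
include hQ

lemma algebraMap_le_of_le_eigenvalues (h : ∀ i, a ≤ hQ.eigenvalues i) :
    algebraMap ℝ _ a ≤ Q := by
  refine (algebraMap_le_iff_le_spectrum (ha := hQ.isSelfAdjoint)).2 ?_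
  rw [hQ.spectrum_real_eq_range_eigenvalues]
  rintro _ ⟨i, rfl⟩
  exact h i

lemma le_algebraMap_of_eigenvalues_le (h : ∀ i, hQ.eigenvalues i ≤ b) :
    Q ≤ algebraMap ℝ _ b := by
  refine (le_algebraMap_iff_spectrum_le (ha := hQ.isSelfAdjoint)).2 ?_
  rw [hQ.spectrum_real_eq_range_eigenvalues]
  rintro _ ⟨i, rfl⟩
  exact h i

lemma det_pos_of_algebraMap_le (ha : 0 < a) (hQa : algebraMap ℝ _ a ≤ Q) : 0 < Q.det := by
  have hspec := (algebraMap_le_iff_le_spectrum (ha := hQ.isSelfAdjoint)).1 hQa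
  rw [hQ.det_eq_prod_eigenvalues]
  exact prod_pos fun i _ => ha.trans_le (hspec _ (hQ.eigenvalues_mem_spectrum_real i))

lemma inv_apply_self_mem_Icc (ha : 0 < a) (hQa : algebraMap ℝ _ a ≤ Q)
    (hQb : Q ≤ algebraMap ℝ _ b) (i : ι) : Q⁻¹ i i ∈ Set.Icc b⁻¹ a⁻¹ := by
  have hlow := (algebraMap_le_iff_le_spectrum (ha := hQ.isSelfAdjoint)).1 hQa
  have hupp := (le_algebraMap_iff_spectrum_le (ha := hQ.isSelfAdjoint)).1 hQb
  have hunit : IsUnit Q :=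
    (isUnit_iff_isUnit_det Q).2 (hQ.det_pos_of_algebraMap_le ha hQa).ne'.isUnit
  have hspec : spectrum ℝ Q⁻¹ = (spectrum ℝ Q)⁻¹ := by
    simpa [coe_units_inv] using (spectrum.map_inv (𝕜 := ℝ) hunit.unit).symm
  have hinv : IsSelfAdjoint Q⁻¹ := hQ.inv.isSelfAdjoint
  refine ⟨le_apply_self_of_algebraMap_le
      ((algebraMap_le_iff_le_spectrum (ha := hinv)).2 fun x hx => ?_) i,
    apply_self_le_of_le_algebraMap
      ((le_algebraMap_iff_spectrum_le (ha := hinv)).2 fun x hx => ?_) i⟩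
  all_goals rw [hspec, Set.mem_inv] at hx
  · simpa using inv_anti₀ (ha.trans_le (hlow _ hx)) (hupp _ hx)
  · simpa using inv_anti₀ ha (hlow _ hx)

end Matrix.IsHermitian

end LoewnerBounds

section LogDet

variable {ι : Type*} [Fintype ι] [DecidableEq ι]

theorem swapLipschitz_log_det_principalSubmatrix {P : Matrix ι ι ℝ} (hP : P.IsHermitian)
    {a b : ℝ} (ha : 0 < a) (hPa : algebraMap ℝ _ a ≤ P) (hPb : P ≤ algebraMap ℝ _ b) :
    SwapLipschitz (log b - log a) fun s => log (P.principalSubmatrix s).det := by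
  intro t x y hx hy
  have hab : a ≤ b :=
    (le_apply_self_of_algebraMap_le hPa x).trans (apply_self_le_of_le_algebraMap hPb x)
  obtain rfl | hxy := eq_or_ne x y
  · simpa using log_le_log ha hab
  set u := insert x (insert y t)
  have hxu : x ∈ u := mem_insert_self _ _
  have hyu : y ∈ u := mem_insert_of_mem (mem_insert_self _ _)
  have hux : u.erase x = insert y t := erase_insert (by simp [hxy, hx])
  have huy : u.erase y = insert x t := by
    rw [show u = insert y (insert x t) from insert_comm _ _ _]
    exact erase_insert (by simp [hxy.symm, hy])
  set Q := P.principalSubmatrix u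
  have hQ : Q.IsHermitian := hP.submatrix _
  have hQa : algebraMap ℝ _ a ≤ Q := by
    simpa [algebraMap_submatrix Subtype.val_injective] using submatrix_mono hPa ((↑) : u → ι)
  have hQb : Q ≤ algebraMap ℝ _ b := by
    simpa [algebraMap_submatrix Subtype.val_injective] using submatrix_mono hPb ((↑) : u → ι)
  have hdet : 0 < Q.det := hQ.det_pos_of_algebraMap_le ha hQa
  have hdiag := hQ.inv_apply_self_mem_Icc ha hQa hQb
  have hbinv : 0 < b⁻¹ := inv_pos.2 (ha.trans_le hab)
  have hpos : ∀ i, 0 < Q⁻¹ i i := fun i => hbinv.trans_le (hdiag i).1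
  have hlog : ∀ v (hv : v ∈ u),
      log (P.principalSubmatrix (u.erase v)).det = log Q.det + log (Q⁻¹ ⟨v, hv⟩ ⟨v, hv⟩) :=
    fun v hv => by
      rw [det_principalSubmatrix_erase P hv hdet.ne'.isUnit,
        log_mul hdet.ne' (hpos _).ne']
  simp only
  rw [← huy, ← hux, hlog y hyu, hlog x hxu, add_sub_add_left_eq_sub]
  calc |log (Q⁻¹ ⟨y, hyu⟩ ⟨y, hyu⟩) - log (Q⁻¹ ⟨x, hxu⟩ ⟨x, hxu⟩)|
      ≤ log a⁻¹ - log b⁻¹ :=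
        abs_sub_le_of_le_of_le (log_le_log hbinv (hdiag _).1) (log_le_log (hpos _) (hdiag _).2)
          (log_le_log hbinv (hdiag _).1) (log_le_log (hpos _) (hdiag _).2)
    _ = log b - log a := by rw [log_inv, log_inv]; ring

end LogDet

section LogMinor

variable {n : ℕ}

lemma varLM_eq_varOn (k : ℕ) (M : Matrix (Fin n) (Fin n) ℝ) :
    varLM k M = varOn (powersetCard k univ) (logMinor M) := by
  simp only [varLM, meanLM, varOn, expect_eq_sum_div_card, card_powersetCard, card_univ,
    Fintype.card_fin]

lemma swapLipschitz_logMinor {M : Matrix (Fin n) (Fin n) ℝ} (hM : M.PosDef) {κ : ℝ}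
    (hκ : condNum hM.1 ≤ κ) : SwapLipschitz (log κ) (logMinor M) := by
  intro t x _ hx hy
  have : Nonempty (Fin n) := ⟨x⟩
  have hmin : ∀ i, minEig hM.1 ≤ hM.1.eigenvalues i :=
    fun i => ciInf_le (Finite.bddBelow_range _) i
  have hmax : ∀ i, hM.1.eigenvalues i ≤ maxEig hM.1 :=
    fun i => le_ciSup (Finite.bddAbove_range _) i
  have hmin_pos : 0 < minEig hM.1 := by
    obtain ⟨i, hi⟩ := exists_eq_ciInf_of_finite (f := hM.1.eigenvalues)
    rw [minEig, ← hi]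
    exact hM.eigenvalues_pos i
  have hlog : log (maxEig hM.1) - log (minEig hM.1) ≤ log κ := by
    have hmax_pos := hmin_pos.trans_le ((hmin x).trans (hmax x))
    rw [← log_div hmax_pos.ne' hmin_pos.ne']
    exact log_le_log (div_pos hmax_pos hmin_pos) hκ
  exact (swapLipschitz_log_det_principalSubmatrix hM.1 hmin_pos
    (hM.1.algebraMap_le_of_le_eigenvalues hmin) (hM.1.le_algebraMap_of_eigenvalues_le hmax)).mono
    hlog hx hy

end LogMinor

theorem standard_error_bound_two_general {n k : ℕ} (hkn : k ≤ n)
    (q : ℕ)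
    (M : Matrix (Fin n) (Fin n) ℝ) (hM : M.PosDef) (khat : ℝ) (hkhat : 1 ≤ khat)
    (hcond : condNum hM.1 ≤ khat) :
    Real.sqrt (varLM k M / q) ≤
      (1 / 2) * Real.sqrt ((min k (n - k) : ℝ) / (q : ℝ)) * Real.log khat := by
  have hvar : varLM k M ≤ min (k : ℝ) (n - k) * (log khat ^ 2 / 4) := by
    simpa [varLM_eq_varOn] using
      (swapLipschitz_logMinor hM hcond).varOn_powersetCard_le_min (by simpa using hkn)
  calc √(varLM k M / q) ≤ √(min (k : ℝ) (n - k) / q * (log khat / 2) ^ 2) := by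
        refine sqrt_le_sqrt ?_
        calc varLM k M / q ≤ min (k : ℝ) (n - k) * (log khat ^ 2 / 4) / q := by gcongr
          _ = min (k : ℝ) (n - k) / q * (log khat / 2) ^ 2 := by ring
    _ = 1 / 2 * √(min (k : ℝ) (n - k) / q) * log khat := by
        rw [sqrt_mul' _ (sq_nonneg _), sqrt_sq (div_nonneg (log_nonneg hkhat) zero_le_two)]
        ring

theorem standard_error_bound_two {n k : ℕ} (hk1 : 1 ≤ k) (hkn : k ≤ n)
    (q : ℕ) (hq : 1 ≤ q)
    (M : Matrix (Fin n) (Fin n) ℝ) (hM : M.PosDef) (khat : ℝ) (hkhat : 1 ≤ khat)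
    (hcond : condNum hM.1 ≤ khat) :
    Real.sqrt (varLM k M / q) ≤
      (1 / 2) * Real.sqrt ((min k (n - k) : ℝ) / (q : ℝ)) * Real.log khat :=
  standard_error_bound_two_general hkn q M hM khat hkhat hcond
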